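/- arXiv:2209.08268 — 4 statements merged into one kernel-verified Lean document; each statement's English description precedes it below -/
import Mathlib

section
/- Let k, l be positive integers, A a k×k complex matrix and B an l×l complex matrix. Then the following are equivalent: (1) for every l×k complex matrix Y there exists a unique l×k complex matrix X satisfying X·A − B·X = Y; (2) the matrices A and B have no common eigenvalue (i.e. the spectra of A and B are disjoint). -/
/-!
The Sylvester operator `X ↦ X * A - B * X` is an endomorphism of a finite-dimensional space, so
unique solvability for every right-hand side is the same as triviality of its kernel. If `μ` is a
common eigenvalue, with left eigenvector `u` of `A` and right eigenvector `w` of `B`, then the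
rank-one matrix `w uᵀ` lies in the kernel. Conversely, the kernel `{X | X * A = B * X}` is
invariant under `X ↦ X * A`; over an algebraically closed field this map has an eigenvector `X`
on a nonzero kernel, and then `X * A = μ • X = B * X` makes `μ` an eigenvalue of both `A` and `B`.
-/

open Matrix Module

namespace Matrix

section Spectrum

variable {K l n : Type*} [Field K] [Fintype n] [DecidableEq n]

theorem exists_mulVec_eq_smul_of_mem_spectrum {B : Matrix n n K} {μ : K}
    (hμ : μ ∈ spectrum K B) : ∃ w ≠ 0, B *ᵥ w = μ • w := by
  rw [← spectrum_toLin', ← End.hasEigenvalue_iff_mem_spectrum] at hμ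
  obtain ⟨w, hw⟩ := hμ.exists_hasEigenvector
  exact ⟨w, hw.2, by simpa using hw.apply_eq_smul⟩

theorem exists_vecMul_eq_smul_of_mem_spectrum {A : Matrix n n K} {μ : K}
    (hμ : μ ∈ spectrum K A) : ∃ u ≠ 0, u ᵥ* A = μ • u := by
  rw [mem_spectrum_iff_isRoot_charpoly, ← charpoly_transpose,
    ← mem_spectrum_iff_isRoot_charpoly] at hμ
  simpa only [mulVec_transpose] using exists_mulVec_eq_smul_of_mem_spectrum hμ

theorem mem_spectrum_of_mul_eq_smul {A : Matrix n n K} {X : Matrix l n K} {μ : K}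
    (hX : X ≠ 0) (h : X * A = μ • X) : μ ∈ spectrum K A := by
  rintro ⟨u, hu⟩
  have hXu : X * (u : Matrix n n K) = 0 := by
    rw [hu, Matrix.mul_sub, Algebra.algebraMap_eq_smul_one, Matrix.mul_smul, Matrix.mul_one, h,
      sub_self]
  simpa [Matrix.mul_assoc, hX] using congrArg (· * ((u⁻¹ : (Matrix n n K)ˣ) : Matrix n n K)) hXu

theorem mem_spectrum_of_mul_eq_smul' {B : Matrix n n K} {X : Matrix n l K} {μ : K}
    (hX : X ≠ 0) (h : B * X = μ • X) : μ ∈ spectrum K B := by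
  rintro ⟨u, hu⟩
  have huX : (u : Matrix n n K) * X = 0 := by
    rw [hu, Matrix.sub_mul, Algebra.algebraMap_eq_smul_one, Matrix.smul_mul, Matrix.one_mul, h,
      sub_self]
  simpa [← Matrix.mul_assoc, hX] using congrArg (((u⁻¹ : (Matrix n n K)ˣ) : Matrix n n K) * ·) huX

end Spectrum

section Sylvester

variable {K m n : Type*} [Field K] [Fintype m] [Fintype n]

def sylvesterMap (A : Matrix n n K) (B : Matrix m m K) : Matrix m n K →ₗ[K] Matrix m n K :=
  mulRightLinearMap m K A - mulLeftLinearMap n K B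

@[simp]
theorem sylvesterMap_apply (A : Matrix n n K) (B : Matrix m m K) (X : Matrix m n K) :
    sylvesterMap A B X = X * A - B * X :=
  rfl

theorem mem_ker_sylvesterMap {A : Matrix n n K} {B : Matrix m m K} {X : Matrix m n K} :
    X ∈ LinearMap.ker (sylvesterMap A B) ↔ X * A = B * X := by
  rw [LinearMap.mem_ker, sylvesterMap_apply, sub_eq_zero]

variable [DecidableEq m] [DecidableEq n] {A : Matrix n n K} {B : Matrix m m K}

theorem exists_ne_zero_mul_eq_mul_of_mem_spectrum {μ : K} (hA : μ ∈ spectrum K A)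
    (hB : μ ∈ spectrum K B) : ∃ X : Matrix m n K, X ≠ 0 ∧ X * A = B * X := by
  obtain ⟨u, hu0, hu⟩ := exists_vecMul_eq_smul_of_mem_spectrum hA
  obtain ⟨w, hw0, hw⟩ := exists_mulVec_eq_smul_of_mem_spectrum hB
  obtain ⟨i, hi⟩ := Function.ne_iff.mp hw0
  obtain ⟨j, hj⟩ := Function.ne_iff.mp hu0
  refine ⟨vecMulVec w u, fun h => mul_ne_zero hi hj (congrFun₂ h i j), ?_⟩
  rw [vecMulVec_mul, mul_vecMulVec, hu, hw, vecMulVec_smul, smul_vecMulVec]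

theorem exists_mem_spectrum_of_ker_sylvesterMap_ne_bot [IsAlgClosed K]
    (h : LinearMap.ker (sylvesterMap A B) ≠ ⊥) : ∃ μ, μ ∈ spectrum K A ∧ μ ∈ spectrum K B := by
  have hmapsTo :
      ∀ X ∈ LinearMap.ker (sylvesterMap A B), X * A ∈ LinearMap.ker (sylvesterMap A B) := by
    intro X hX
    rw [mem_ker_sylvesterMap] at hX ⊢
    rw [← Matrix.mul_assoc, ← hX]
  have : Nontrivial (LinearMap.ker (sylvesterMap A B)) := Submodule.nontrivial_iff_ne_bot.mpr h
  obtain ⟨μ, hμ⟩ := End.exists_eigenvalue ((mulRightLinearMap m K A).restrict hmapsTo)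
  obtain ⟨⟨X, hX⟩, hXμ⟩ := hμ.exists_hasEigenvector
  have hXA : X * A = μ • X := congrArg Subtype.val hXμ.apply_eq_smul
  have hX0 : X ≠ 0 := fun h => hXμ.2 (Subtype.ext h)
  exact ⟨μ, mem_spectrum_of_mul_eq_smul hX0 hXA,
    mem_spectrum_of_mul_eq_smul' hX0 ((mem_ker_sylvesterMap.mp hX).symm.trans hXA)⟩

theorem ker_sylvesterMap_eq_bot_iff [IsAlgClosed K] :
    LinearMap.ker (sylvesterMap A B) = ⊥ ↔ Disjoint (spectrum K A) (spectrum K B) := by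
  rw [Set.disjoint_left]
  constructor
  · intro h μ hA hB
    obtain ⟨X, hX0, hX⟩ := exists_ne_zero_mul_eq_mul_of_mem_spectrum hA hB
    exact hX0 (LinearMap.ker_eq_bot'.mp h X (mem_ker_sylvesterMap.mpr hX))
  · intro h
    by_contra hne
    obtain ⟨μ, hA, hB⟩ := exists_mem_spectrum_of_ker_sylvesterMap_ne_bot hne
    exact h hA hB

theorem bijective_sylvesterMap_iff [IsAlgClosed K] :
    Function.Bijective (sylvesterMap A B) ↔ Disjoint (spectrum K A) (spectrum K B) := by
  rw [← ker_sylvesterMap_eq_bot_iff, LinearMap.ker_eq_bot]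
  exact ⟨fun h => h.1, fun h => ⟨h, LinearMap.injective_iff_surjective.mp h⟩⟩

end Sylvester

end Matrix

theorem sylvester_unique_solution_iff_disjoint_spectra_general
    (k l : ℕ)
    (A : Matrix (Fin k) (Fin k) ℂ) (B : Matrix (Fin l) (Fin l) ℂ) :
    (∀ Y : Matrix (Fin l) (Fin k) ℂ,
        ∃! X : Matrix (Fin l) (Fin k) ℂ, X * A - B * X = Y) ↔
      spectrum ℂ A ∩ spectrum ℂ B = ∅ := by
  rw [← Set.disjoint_iff_inter_eq_empty, ← bijective_sylvesterMap_iff,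
    Function.bijective_iff_existsUnique]
  simp only [sylvesterMap_apply]

/-- **Sylvester equation solvability.** For `A : k×k` and `B : l×l` complex matrices
(`k, l > 0`), the equation `X·A − B·X = Y` has a unique solution `X` for every `Y`
iff `A` and `B` have no common eigenvalue. -/
theorem sylvester_unique_solution_iff_disjoint_spectra
    (k l : ℕ) (hk : 0 < k) (hl : 0 < l)
    (A : Matrix (Fin k) (Fin k) ℂ) (B : Matrix (Fin l) (Fin l) ℂ) :
    (∀ Y : Matrix (Fin l) (Fin k) ℂ,
        ∃! X : Matrix (Fin l) (Fin k) ℂ, X * A - B * X = Y) ↔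
      spectrum ℂ A ∩ spectrum ℂ B = ∅ :=
  sylvester_unique_solution_iff_disjoint_spectra_general k l A B
end

section
/- Let V be a complex vector space, ∘ a symmetric ℂ-bilinear product on V, and Q : V → V a ℂ-linear endomorphism satisfying Q(X∘Y) = X∘(Q Y) − X∘Y for all X, Y ∈ V. If X, Y, Z ∈ V satisfy Q X = λ·X, Q Y = λ·Y and Q Z = λ·Z for the same λ ∈ ℂ, then (X∘Y)∘Z = 0. -/
/-! Multiplication by any element lowers a `Q`-eigenvalue by one. Hence `W = (X∘Y)∘Z` is an
eigenvector for `λ - 1` (multiply the eigenvector `Z` by `X∘Y`), and by symmetry also for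
`λ - 2` (multiply the `(λ - 1)`-eigenvector `X∘Y` by `Z`); two eigenvalues differing by `1`
force `W = 0`. -/

section

variable {R M : Type*} [CommRing R] [AddCommGroup M] [Module R M]

theorem apply_mul_eq_sub_one_smul {mul : M →ₗ[R] M →ₗ[R] M} {Q : M →ₗ[R] M}
    (hQ : ∀ a b : M, Q (mul a b) = mul a (Q b) - mul a b) (a : M) {b : M} {μ : R}
    (hb : Q b = μ • b) : Q (mul a b) = (μ - 1) • mul a b := by
  rw [hQ, hb, map_smul, sub_smul, one_smul]

theorem eq_zero_of_smul_eq_sub_one_smul {v : M} {μ : R} (h : μ • v = (μ - 1) • v) : v = 0 := by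
  rwa [sub_smul, one_smul, eq_comm, sub_eq_self] at h

end

theorem triple_mul_eq_zero_same_eigenvalue_general
    (V : Type) [AddCommGroup V] [Module ℂ V]
    (mul : V →ₗ[ℂ] V →ₗ[ℂ] V)
    (hcomm : ∀ X Y : V, mul X Y = mul Y X)
    (Q : V →ₗ[ℂ] V)
    (hQ : ∀ X Y : V, Q (mul X Y) = mul X (Q Y) - mul X Y)
    (lam : ℂ) (X Y Z : V)
    (hY : Q Y = lam • Y) (hZ : Q Z = lam • Z) :
    mul (mul X Y) Z = 0 := by
  have hXY : Q (mul X Y) = (lam - 1) • mul X Y := apply_mul_eq_sub_one_smul hQ X hY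
  have hW : Q (mul (mul X Y) Z) = (lam - 1) • mul (mul X Y) Z :=
    apply_mul_eq_sub_one_smul hQ (mul X Y) hZ
  have hW' : Q (mul (mul X Y) Z) = (lam - 1 - 1) • mul (mul X Y) Z := by
    rw [hcomm]
    exact apply_mul_eq_sub_one_smul hQ Z hXY
  exact eq_zero_of_smul_eq_sub_one_smul (hW.symm.trans hW')

/-- If `Q(X∘Y) = X∘(QY) − X∘Y` for a symmetric bilinear product `∘`, and
`X`, `Y`, `Z` are eigenvectors of `Q` for the same eigenvalue `λ`, then
`(X∘Y)∘Z = 0`. -/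
theorem triple_mul_eq_zero_same_eigenvalue
    (V : Type) [AddCommGroup V] [Module ℂ V]
    (mul : V →ₗ[ℂ] V →ₗ[ℂ] V)
    (hcomm : ∀ X Y : V, mul X Y = mul Y X)
    (Q : V →ₗ[ℂ] V)
    (hQ : ∀ X Y : V, Q (mul X Y) = mul X (Q Y) - mul X Y)
    (lam : ℂ) (X Y Z : V)
    (hX : Q X = lam • X) (hY : Q Y = lam • Y) (hZ : Q Z = lam • Z) :
    mul (mul X Y) Z = 0 :=
  triple_mul_eq_zero_same_eigenvalue_general V mul hcomm Q hQ lam X Y Z hY hZ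
end

section
/- Let V be a finite-dimensional complex inner product space with Hermitian inner product h, Q : V → V a ℂ-linear endomorphism that is self-adjoint with respect to h, and κ : V → V a conjugate-linear map (additive, with κ(c·x) = conj(c)·κ(x)) such that κ∘κ = id, h(κx, κy) = h(y, x) for all x, y ∈ V, and κ∘Q∘κ = −Q. If dim V is odd, then 0 is an eigenvalue of Q. -/
open scoped ComplexConjugate InnerProductSpace

/-! In an orthonormal basis `b`, the matrix of `Q` has entries `⟪b i, Q (b j)⟫`. Since `κ` is
antiunitary, `κ ∘ b` is again an orthonormal basis, and `κ Q κ = -Q` together with the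
self-adjointness of `Q` make the matrix of `Q` in `κ ∘ b` the negative transpose of its matrix in
`b`. Comparing determinants gives `det Q = (-1) ^ dim V * det Q = -det Q`, so `det Q = 0`. -/

section Antiunitary

variable {ι 𝕜 E : Type*} [RCLike 𝕜] [NormedAddCommGroup E] [InnerProductSpace 𝕜 E]
  {κ : E → E}

theorem Orthonormal.comp_antiunitary (hκ : ∀ x y, ⟪κ x, κ y⟫_𝕜 = ⟪y, x⟫_𝕜) {v : ι → E}
    (hv : Orthonormal 𝕜 v) : Orthonormal 𝕜 (κ ∘ v) := by
  classical
  rw [orthonormal_iff_ite] at hv ⊢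
  intro i j
  rw [Function.comp_apply, Function.comp_apply, hκ, hv]
  exact if_congr eq_comm rfl rfl

variable [Fintype ι]

section FiniteDimensional

variable [FiniteDimensional 𝕜 E]

noncomputable def OrthonormalBasis.compAntiunitary (b : OrthonormalBasis ι 𝕜 E)
    (hκ : ∀ x y, ⟪κ x, κ y⟫_𝕜 = ⟪y, x⟫_𝕜) : OrthonormalBasis ι 𝕜 E :=
  have hon := b.orthonormal.comp_antiunitary hκ
  .mk hon <| (hon.linearIndependent.span_eq_top_of_card_eq_finrank'
    (Module.finrank_eq_card_basis b.toBasis).symm).ge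

theorem OrthonormalBasis.coe_compAntiunitary (b : OrthonormalBasis ι 𝕜 E)
    (hκ : ∀ x y, ⟪κ x, κ y⟫_𝕜 = ⟪y, x⟫_𝕜) : ⇑(b.compAntiunitary hκ) = κ ∘ b :=
  OrthonormalBasis.coe_mk (b.orthonormal.comp_antiunitary hκ) _

end FiniteDimensional

variable [DecidableEq ι]

theorem OrthonormalBasis.toMatrix_apply (b : OrthonormalBasis ι 𝕜 E) (f : E →ₗ[𝕜] E) (i j : ι) :
    LinearMap.toMatrix b.toBasis b.toBasis f i j = ⟪b i, f (b j)⟫_𝕜 := by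
  simp only [LinearMap.toMatrix_apply, OrthonormalBasis.coe_toBasis,
    OrthonormalBasis.coe_toBasis_repr_apply, b.repr_apply_apply]

variable [FiniteDimensional 𝕜 E]

theorem OrthonormalBasis.toMatrix_compAntiunitary_eq_neg_transpose {Q : E →ₗ[𝕜] E}
    (hQ : Q.IsSymmetric) (hκ : ∀ x y, ⟪κ x, κ y⟫_𝕜 = ⟪y, x⟫_𝕜) (hinv : ∀ x, κ (κ x) = x)
    (hκQ : ∀ x, κ (Q (κ x)) = -Q x) (b : OrthonormalBasis ι 𝕜 E) :
    LinearMap.toMatrix (b.compAntiunitary hκ).toBasis (b.compAntiunitary hκ).toBasis Q =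
      -(LinearMap.toMatrix b.toBasis b.toBasis Q).transpose := by
  ext i j
  simp only [OrthonormalBasis.toMatrix_apply, b.coe_compAntiunitary, Function.comp_apply,
    Matrix.neg_apply, Matrix.transpose_apply]
  calc ⟪κ (b i), Q (κ (b j))⟫_𝕜
      = ⟪Q (κ (b i)), κ (b j)⟫_𝕜 := (hQ _ _).symm
    _ = ⟪κ (κ (b j)), κ (Q (κ (b i)))⟫_𝕜 := (hκ _ _).symm
    _ = -⟪b j, Q (b i)⟫_𝕜 := by rw [hinv, hκQ, inner_neg_right]

end Antiunitary

theorem LinearMap.det_eq_zero_of_toMatrix_eq_neg_transpose {K M ι : Type*} [Field K] [CharZero K]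
    [AddCommGroup M] [Module K M] [Fintype ι] [DecidableEq ι] (b c : Module.Basis ι K M)
    {f : M →ₗ[K] M} (hf : toMatrix c c f = -(toMatrix b b f).transpose)
    (hodd : Odd (Fintype.card ι)) : LinearMap.det f = 0 := by
  have : LinearMap.det f = -LinearMap.det f := by
    conv_lhs => rw [← det_toMatrix c, hf]
    rw [Matrix.det_neg, Matrix.det_transpose, det_toMatrix, hodd.neg_one_pow, neg_one_mul]
  exact self_eq_neg.mp this

theorem zero_is_eigenvalue_of_odd_dim_general
    (V : Type) [NormedAddCommGroup V] [InnerProductSpace ℂ V]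
    [FiniteDimensional ℂ V]
    (Q : V →ₗ[ℂ] V)
    (hsa : ∀ x y : V, (inner ℂ (Q x) y : ℂ) = inner ℂ x (Q y))
    (κ : V → V)
    (hinv : ∀ x : V, κ (κ x) = x)
    (hκh : ∀ x y : V, (inner ℂ (κ x) (κ y) : ℂ) = inner ℂ y x)
    (hκQ : ∀ x : V, κ (Q (κ x)) = -(Q x))
    (hodd : Odd (Module.finrank ℂ V)) :
    Module.End.HasEigenvalue Q 0 := by
  let b := stdOrthonormalBasis ℂ V
  have hdet : LinearMap.det Q = 0 :=
    LinearMap.det_eq_zero_of_toMatrix_eq_neg_transpose b.toBasis (b.compAntiunitary hκh).toBasis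
      (b.toMatrix_compAntiunitary_eq_neg_transpose hsa hκh hinv hκQ)
      (by rwa [Fintype.card_fin])
  exact ((LinearMap.hasEigenvalue_zero_tfae Q).out 0 3).mpr hdet

/-- Pointwise tt*-geometry: if `Q` is `h`-self-adjoint, `κ` is a
conjugate-linear involution compatible with `h`, `κQκ = −Q`, and `dim V` is
odd, then `0` is an eigenvalue of `Q`. -/
theorem zero_is_eigenvalue_of_odd_dim
    (V : Type) [NormedAddCommGroup V] [InnerProductSpace ℂ V]
    [FiniteDimensional ℂ V]
    (Q : V →ₗ[ℂ] V)
    (hsa : ∀ x y : V, (inner ℂ (Q x) y : ℂ) = inner ℂ x (Q y))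
    (κ : V → V)
    (hadd : ∀ x y : V, κ (x + y) = κ x + κ y)
    (hsmul : ∀ (c : ℂ) (x : V), κ (c • x) = (conj c) • κ x)
    (hinv : ∀ x : V, κ (κ x) = x)
    (hκh : ∀ x y : V, (inner ℂ (κ x) (κ y) : ℂ) = inner ℂ y x)
    (hκQ : ∀ x : V, κ (Q (κ x)) = -(Q x))
    (hodd : Odd (Module.finrank ℂ V)) :
    Module.End.HasEigenvalue Q 0 :=
  zero_is_eigenvalue_of_odd_dim_general V Q hsa κ hinv hκh hκQ hodd
end

section
/- Let X be a topological space and Q : X → M_r(ℂ) a continuous map into r×r complex matrices. Then the set of points p ∈ X such that for all eigenvalues λ, μ of Q(p) one has λ − μ ≠ 1 and λ − μ ≠ −1 is an open subset of X. -/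
/-!
Two eigenvalues of `A` differ by `1` exactly when the characteristic polynomials of `A` and
`A + 1` have a common root, i.e. when their resultant vanishes. The coefficients of a
characteristic polynomial are polynomials in the matrix entries and the resultant is a polynomial
in the coefficients, so the set in question is the non-vanishing locus of a continuous function.
-/

open Polynomial

section Continuity

variable {X : Type*} [TopologicalSpace X]

theorem Continuous.charpoly_coeff {R : Type*} [CommRing R] [TopologicalSpace R]
    [IsTopologicalRing R] {n : Type*} [Fintype n] [DecidableEq n] {Q : X → Matrix n n R}
    (hQ : Continuous Q) (k : ℕ) : Continuous fun p ↦ (Q p).charpoly.coeff k := by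
  have h (p : X) : (Q p).charpoly.coeff k =
      MvPolynomial.eval (fun ij ↦ Q p ij.1 ij.2) ((Matrix.charpoly.univ R n).coeff k) := by
    rw [MvPolynomial.eval, Matrix.charpoly.univ_coeff_eval₂Hom]; rfl
  simp_rw [h]
  exact MvPolynomial.continuous_eval _ |>.comp <| continuous_pi fun ij ↦ hQ.matrix_elem ij.1 ij.2

theorem Continuous.resultant {R : Type*} [CommRing R] [TopologicalSpace R] [IsTopologicalRing R]
    {f g : X → R[X]} (hf : ∀ k, Continuous fun p ↦ (f p).coeff k)
    (hg : ∀ k, Continuous fun p ↦ (g p).coeff k) (m n : ℕ) :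
    Continuous fun p ↦ (f p).resultant (g p) m n := by
  refine Continuous.matrix_det <| continuous_matrix fun i j ↦ ?_
  induction j using Fin.addCases <;>
    simp only [sylvester, Matrix.of_apply, Fin.addCases_left, Fin.addCases_right] <;>
    split_ifs
  all_goals first | exact continuous_const | exact hf _ | exact hg _

end Continuity

theorem Polynomial.resultant_eq_zero_iff_exists_isRoot {K : Type*} [Field K] {f g : K[X]}
    (hf : f.Monic) (hg : g.Monic) (hf' : f.Splits) (hg' : g.Splits) :
    f.resultant g = 0 ↔ ∃ a, f.IsRoot a ∧ g.IsRoot a := by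
  rw [resultant_eq_prod_roots_sub f g hf hg hf' hg', Multiset.prod_eq_zero_iff]
  simp [Multiset.mem_product, sub_eq_zero, mem_roots hf.ne_zero, mem_roots hg.ne_zero]

theorem Matrix.resultant_charpoly_eq_zero_iff {K : Type*} [Field K] [IsAlgClosed K]
    {m n : Type*} [Fintype m] [DecidableEq m] [Fintype n] [DecidableEq n]
    (A : Matrix m m K) (B : Matrix n n K) :
    A.charpoly.resultant B.charpoly = 0 ↔ ∃ a ∈ spectrum K A, a ∈ spectrum K B := by
  rw [resultant_eq_zero_iff_exists_isRoot A.charpoly_monic B.charpoly_monic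
    (IsAlgClosed.splits _) (IsAlgClosed.splits _)]
  simp only [← mem_spectrum_iff_isRoot_charpoly]

theorem spectrum.mem_add_one_iff {K A : Type*} [Field K] [Ring A] [Algebra K A] (a : A) (x : K) :
    x ∈ spectrum K (a + 1) ↔ x - 1 ∈ spectrum K a := by
  simp only [spectrum.mem_iff, map_sub, map_one, sub_sub, add_comm (1 : A)]

/-- The IS condition is open: along a continuous family `Q : X → M_r(ℂ)`, the
set of points `p` where no difference of two eigenvalues of `Q p` equals `±1`
is open. -/
theorem isOpen_IS_condition
    {X : Type} [TopologicalSpace X] {r : ℕ}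
    (Q : X → Matrix (Fin r) (Fin r) ℂ) (hQ : Continuous Q) :
    IsOpen {p : X | ∀ a ∈ spectrum ℂ (Q p), ∀ b ∈ spectrum ℂ (Q p),
      a - b ≠ 1 ∧ a - b ≠ -1} := by
  -- `simp` turns the default degree arguments `natDegree (charpoly _)` of `resultant` into `r`.
  have hres : Continuous fun p ↦ (Q p).charpoly.resultant (Q p + 1).charpoly := by
    simpa using Continuous.resultant hQ.charpoly_coeff (hQ.add continuous_const).charpoly_coeff r r
  convert isOpen_ne_fun hres continuous_const using 1
  ext p
  rw [Set.mem_ofPred_eq, Set.mem_ofPred_eq, ne_eq, Matrix.resultant_charpoly_eq_zero_iff]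
  simp only [spectrum.mem_add_one_iff, not_exists, not_and]
  constructor
  · intro h a ha ha'
    exact (h a ha _ ha').1 (sub_sub_cancel a 1)
  · intro h a ha b hb
    refine ⟨fun hab ↦ h a ha ?_, fun hab ↦ h b hb ?_⟩
    · rwa [show a - 1 = b by linear_combination hab]
    · rwa [show b - 1 = a by linear_combination -hab]
end
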